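/- Let b be a regular symmetric or alternate bilinear form on a finite-dimensional vector space V over a field K with b(u(x),u(y)) = b(x,y) for all x,y, where u ∈ GL(V) and u − id is nilpotent. Then for every positive integer k, Ker(u − id)^k is the b-orthogonal complement of Im(u − id)^k. -/

import Mathlib

/-! The identity `b (u⁻¹ x) y = b x (u y)` makes `u⁻¹ - 1` and `u - 1` adjoint, hence also
their `k`-th powers, so by regularity `x ⊥ Im (u - 1)^k` iff `(u⁻¹ - 1)^k x = 0`. Since
`u⁻¹ - 1 = -u⁻¹ (u - 1)` with `-u⁻¹` invertible and commuting with `u - 1`, the kernels of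
`(u⁻¹ - 1)^k` and `(u - 1)^k` agree. -/

namespace LinearMap

variable {R M M₂ : Type*} [CommRing R] [AddCommGroup M] [Module R M]
  [AddCommGroup M₂] [Module R M₂]

theorem IsAdjointPair.pow {B : M →ₗ[R] M →ₗ[R] M₂} {f g : Module.End R M}
    (h : IsAdjointPair B B f g) (k : ℕ) : IsAdjointPair B B ⇑(f ^ k) ⇑(g ^ k) := by
  induction k with
  | zero => exact isAdjointPair_one
  | succ k ih => rw [pow_succ f, pow_succ' g]; exact ih.mul h

theorem IsAdjointPair.forall_apply_eq_zero_iff {B : M →ₗ[R] M →ₗ[R] M₂} {f g : M → M}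
    (hB : B.SeparatingLeft) (h : IsAdjointPair B B f g) (x : M) :
    (∀ y, B x (g y) = 0) ↔ f x = 0 := by
  simp_rw [← h x]
  exact ⟨hB (f x), fun hx y ↦ by rw [hx, map_zero₂]⟩

theorem IsOrthogonal.isAdjointPair_symm {B : LinearMap.BilinForm R M} {u : M ≃ₗ[R] M}
    (hu : B.IsOrthogonal u) : IsAdjointPair B B u.symm u := fun x y ↦ by
  rw [← hu, LinearEquiv.apply_symm_apply]

theorem IsOrthogonal.isAdjointPair_symm_sub_one {B : LinearMap.BilinForm R M}
    {u : M ≃ₗ[R] M} (hu : B.IsOrthogonal u) :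
    IsAdjointPair B B ⇑((u.symm : Module.End R M) - 1) ⇑((u : Module.End R M) - 1) :=
  hu.isAdjointPair_symm.sub isAdjointPair_one

end LinearMap

theorem LinearEquiv.ker_pow_symm_sub_one {R M : Type*} [CommRing R] [AddCommGroup M]
    [Module R M] (u : M ≃ₗ[R] M) (k : ℕ) :
    LinearMap.ker (((u.symm : Module.End R M) - 1) ^ k) =
      LinearMap.ker (((u : Module.End R M) - 1) ^ k) := by
  set v : Module.End R M := u.symm.toLinearMap
  have hfactor : v - 1 = -v * ((u : Module.End R M) - 1) := by
    ext x; simp [v]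
  have hcomm : Commute (-v) ((u : Module.End R M) - 1) := by
    refine (Commute.sub_right ?_ (Commute.one_right _)).neg_left
    ext x; simp [v]
  have hinj : Function.Injective ⇑((-v) ^ k) := by
    rw [Module.End.coe_pow]
    exact (neg_injective.comp u.symm.injective).iterate k
  rw [hfactor, hcomm.mul_pow, Module.End.mul_eq_comp,
    LinearMap.ker_comp_of_ker_eq_bot _ (LinearMap.ker_eq_bot_of_injective hinj)]

theorem ker_eq_orthogonal_range_pow_general {K V : Type*} [Field K]
    [AddCommGroup V] [Module K V]
    (B : V →ₗ[K] V →ₗ[K] K)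
    (hreg : B.Nondegenerate)
    (u : V ≃ₗ[K] V)
    (hiso : ∀ x y, B (u x) (u y) = B x y) :
    ∀ k : ℕ, 0 < k → ∀ x : V,
      x ∈ LinearMap.ker (((u : V →ₗ[K] V) - LinearMap.id) ^ k) ↔
        ∀ y : V, B x (((((u : V →ₗ[K] V) - LinearMap.id) ^ k : V →ₗ[K] V)) y) = 0 := by
  intro k _ x
  rw [← Module.End.one_eq_id, ← u.ker_pow_symm_sub_one k, LinearMap.mem_ker]
  exact ((LinearMap.IsOrthogonal.isAdjointPair_symm_sub_one hiso).pow k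
    |>.forall_apply_eq_zero_iff hreg.1 x).symm

theorem ker_eq_orthogonal_range_pow {K V : Type*} [Field K]
    [AddCommGroup V] [Module K V] [FiniteDimensional K V]
    (B : V →ₗ[K] V →ₗ[K] K)
    (hreg : B.Nondegenerate)
    (hsa : (∀ x y, B x y = B y x) ∨ (∀ x, B x x = 0))
    (u : V ≃ₗ[K] V)
    (hiso : ∀ x y, B (u x) (u y) = B x y)
    (hnil : IsNilpotent ((u : V →ₗ[K] V) - LinearMap.id)) :
    ∀ k : ℕ, 0 < k → ∀ x : V,
      x ∈ LinearMap.ker (((u : V →ₗ[K] V) - LinearMap.id) ^ k) ↔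
        ∀ y : V, B x (((((u : V →ₗ[K] V) - LinearMap.id) ^ k : V →ₗ[K] V)) y) = 0 :=
  ker_eq_orthogonal_range_pow_general B hreg u hiso
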